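/- arXiv:1910.03186 — 2 statements merged into one kernel-verified Lean document; each statement's English description precedes it below -/
import Mathlib

section
/- In the quantum torus over ℂ(q) generated by P₁,P₂,P₃,X₁,X₂,X₃ with P_jX_j = q²X_jP_j and all other pairs commuting, the gl₃ Toda Hamiltonians H₁^{(3)} = P₁+P₂+P₃+P₂X₂X₁^{-1}+P₃X₃X₂^{-1} and H₂^{(3)} = P₁P₂+P₁P₃+P₂P₃+P₁P₃X₃X₂^{-1}+P₂P₃X₂X₁^{-1} commute: H₁^{(3)}H₂^{(3)} = H₂^{(3)}H₁^{(3)}. -/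
/-!
Put `u = X₂X₁⁻¹`, `v = X₃X₂⁻¹`, `a = P₂u`, `b = P₃v`, and let `e₁, e₂` be the elementary
symmetric polynomials in the `P`'s, so that `H₁ = e₁ + a + b` and `H₂ = e₂ + P₁b + P₃a`.
In the products that matter the powers of `q` cancel: `a` commutes with `P₃`, `P₁P₂` and `P₁b`,
and `b` commutes with `P₁`, `P₂P₃` and `P₃a`. Then
`[H₁, H₂] = [e₁ + b, e₂ + P₁b] + [e₁ + a, e₂ + P₃a] - [e₁, e₂] + [a, P₁b] + [b, P₃a]`,
and the first two commutators vanish by one and the same `gl₂`-type identity.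
-/

section

variable {R : Type*} [Ring R]

theorem commute_add_add_mul_add {p t m x : R} (hpt : Commute p t) (hpm : Commute p m)
    (htm : Commute t m) (hxp : Commute x p) (hxm : Commute x m) :
    Commute (p + t + x) (p * t + m + p * x) := by
  rw [commute_iff_lie_eq]
  calc ⁅p + t + x, p * t + m + p * x⁆
      = p * ⁅p, t⁆ + ⁅t, p⁆ * (t + x) + ⁅p, m⁆ + ⁅t, m⁆ + p * ⁅p, x⁆ + ⁅x, p⁆ * (t + x)
          + ⁅x, m⁆ := by
        simp only [Ring.lie_def]; noncomm_ring
    _ = 0 := by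
        simp [hpt.lie_eq, hpt.symm.lie_eq, hpm.lie_eq, htm.lie_eq, hxp.lie_eq, hxp.symm.lie_eq,
          hxm.lie_eq]

theorem commute_mul_of_mul_eq_mul_mul {c x y w : R} (hcy : Commute c y)
    (hxy : x * y = c * (y * x)) (hwx : w * x = c * (x * w)) : Commute x (y * w) :=
  calc x * (y * w) = c * (y * x) * w := by rw [← mul_assoc, hxy]
    _ = y * (c * (x * w)) := by rw [← mul_assoc c, hcy.eq, mul_assoc, mul_assoc]
    _ = y * w * x := by rw [← hwx, mul_assoc]

theorem Units.inv_mul_eq_mul_mul_inv {c P : R} {X : Rˣ} (hcX : Commute c X)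
    (h : P * X = c * (X * P)) : (↑X⁻¹ : R) * P = c * (P * ↑X⁻¹) := by
  have hX : SemiconjBy (X : R) (c * P) P := (hcX.symm.left_comm P).trans h.symm
  rw [hX.units_inv_symm_left.eq, mul_assoc]

theorem commute_toda3_of_commute {P₁ P₂ P₃ a b : R} (h12 : Commute P₁ P₂) (h13 : Commute P₁ P₃)
    (h23 : Commute P₂ P₃) (ha3 : Commute a P₃) (ha12 : Commute a (P₁ * P₂))
    (hb1 : Commute b P₁) (hb23 : Commute b (P₂ * P₃)) (hab : Commute a (P₁ * b))
    (hba : Commute b (P₃ * a)) :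
    Commute (P₁ + P₂ + P₃ + a + b) (P₁ * P₂ + P₁ * P₃ + P₂ * P₃ + P₁ * b + P₃ * a) := by
  have h1t : Commute P₁ (P₂ + P₃) := h12.add_right h13
  have h1m : Commute P₁ (P₂ * P₃) := h12.mul_right h13
  have htm : Commute (P₂ + P₃) (P₂ * P₃) :=
    ((Commute.refl P₂).mul_right h23).add_left (h23.symm.mul_right (Commute.refl P₃))
  have hE : Commute (P₁ + (P₂ + P₃)) (P₁ * (P₂ + P₃) + P₂ * P₃) :=
    (((Commute.refl P₁).mul_right h1t).add_right h1m).add_left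
      ((h1t.symm.mul_right (Commute.refl _)).add_right htm)
  have hSb := commute_add_add_mul_add h1t h1m htm hb1 hb23
  have htm' : Commute (P₁ + P₂) (P₁ * P₂) :=
    ((Commute.refl P₁).mul_right h12).add_left (h12.symm.mul_right (Commute.refl P₂))
  have hSa := commute_add_add_mul_add (h13.symm.add_right h23.symm)
    (h13.symm.mul_right h23.symm) htm' ha3 ha12
  rw [mul_add, ← h13.eq, ← h23.eq] at hSa
  rw [commute_iff_lie_eq]
  calc ⁅P₁ + P₂ + P₃ + a + b, P₁ * P₂ + P₁ * P₃ + P₂ * P₃ + P₁ * b + P₃ * a⁆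
      = ⁅P₁ + (P₂ + P₃) + b, P₁ * (P₂ + P₃) + P₂ * P₃ + P₁ * b⁆
        + ⁅P₃ + (P₁ + P₂) + a, P₁ * P₃ + P₂ * P₃ + P₁ * P₂ + P₃ * a⁆
        - ⁅P₁ + (P₂ + P₃), P₁ * (P₂ + P₃) + P₂ * P₃⁆ + ⁅a, P₁ * b⁆ + ⁅b, P₃ * a⁆ := by
        simp only [Ring.lie_def]; noncomm_ring
    _ = 0 := by rw [hSb.lie_eq, hSa.lie_eq, hE.lie_eq, hab.lie_eq, hba.lie_eq]; abel

theorem commute_toda3 {c P₁ P₂ P₃ u v : R} (hc : ∀ r, Commute c r) (h12 : Commute P₁ P₂)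
    (h13 : Commute P₁ P₃) (h23 : Commute P₂ P₃) (hu1 : u * P₁ = c * (P₁ * u))
    (hu2 : P₂ * u = c * (u * P₂)) (hu3 : Commute u P₃) (hv1 : Commute v P₁)
    (hv2 : v * P₂ = c * (P₂ * v)) (hv3 : P₃ * v = c * (v * P₃)) (huv : Commute u v) :
    Commute (P₁ + P₂ + P₃ + P₂ * u + P₃ * v)
      (P₁ * P₂ + P₁ * P₃ + P₂ * P₃ + P₁ * (P₃ * v) + P₃ * (P₂ * u)) := by
  have ha1 : P₂ * u * P₁ = c * (P₁ * (P₂ * u)) := by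
    rw [mul_assoc, hu1, (hc _).symm.left_comm, h12.symm.left_comm]
  have ha2 : P₂ * (P₂ * u) = c * (P₂ * u * P₂) := by
    conv_lhs => rw [hu2]
    rw [(hc _).symm.left_comm, ← mul_assoc P₂]
  have hb2 : P₃ * v * P₂ = c * (P₂ * (P₃ * v)) := by
    rw [mul_assoc, hv2, (hc _).symm.left_comm, h23.symm.left_comm]
  have hb3 : P₃ * (P₃ * v) = c * (P₃ * v * P₃) := by
    conv_lhs => rw [hv3]
    rw [(hc _).symm.left_comm, ← mul_assoc P₃]
  have hba : P₃ * v * (P₂ * u) = c * (P₂ * u * (P₃ * v)) := by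
    calc P₃ * v * (P₂ * u) = P₃ * (v * P₂ * u) := by simp only [mul_assoc]
      _ = c * (P₂ * (P₃ * (v * u))) := by
        rw [hv2]; simp only [mul_assoc]; rw [(hc _).symm.left_comm, h23.symm.left_comm]
      _ = c * (P₂ * u * (P₃ * v)) := by rw [mul_assoc P₂, hu3.left_comm, huv.eq]
  have ha3 : Commute (P₂ * u) P₃ := h23.mul_left hu3
  exact commute_toda3_of_commute h12 h13 h23 ha3 (commute_mul_of_mul_eq_mul_mul (hc P₁) ha1 ha2)
    (h13.symm.mul_left hv1) (commute_mul_of_mul_eq_mul_mul (hc P₂) hb2 hb3)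
    (commute_mul_of_mul_eq_mul_mul (hc P₁) ha1 hba)
    (ha3.eq ▸ commute_mul_of_mul_eq_mul_mul (hc _) hba hb3)

end

/-- The `gl₃` quantum Toda Hamiltonians
`H₁ = P₁+P₂+P₃+P₂X₂X₁⁻¹+P₃X₃X₂⁻¹` and
`H₂ = P₁P₂+P₁P₃+P₂P₃+P₁P₃X₃X₂⁻¹+P₂P₃X₂X₁⁻¹` commute in the quantum torus with
`P_jX_j = q²X_jP_j` and all other pairs of generators commuting. -/
theorem stmt5 {A : Type*} [Ring A] (q : A) (hq : ∀ a : A, q * a = a * q)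
    (P₁ P₂ P₃ : A) (X₁ X₂ X₃ : Aˣ)
    (h1 : P₁ * (X₁ : A) = q ^ 2 * ((X₁ : A) * P₁))
    (h2 : P₂ * (X₂ : A) = q ^ 2 * ((X₂ : A) * P₂))
    (h3 : P₃ * (X₃ : A) = q ^ 2 * ((X₃ : A) * P₃))
    (c12 : Commute P₁ P₂) (c13 : Commute P₁ P₃) (c23 : Commute P₂ P₃)
    (c1x2 : Commute P₁ (X₂ : A)) (c1x3 : Commute P₁ (X₃ : A))
    (c2x1 : Commute P₂ (X₁ : A)) (c2x3 : Commute P₂ (X₃ : A))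
    (c3x1 : Commute P₃ (X₁ : A)) (c3x2 : Commute P₃ (X₂ : A))
    (cx12 : Commute (X₁ : A) (X₂ : A)) (cx13 : Commute (X₁ : A) (X₃ : A))
    (cx23 : Commute (X₂ : A) (X₃ : A)) :
    (P₁ + P₂ + P₃ + P₂ * (X₂ : A) * ((X₁⁻¹ : Aˣ) : A) + P₃ * (X₃ : A) * ((X₂⁻¹ : Aˣ) : A)) *
      (P₁ * P₂ + P₁ * P₃ + P₂ * P₃ + P₁ * P₃ * (X₃ : A) * ((X₂⁻¹ : Aˣ) : A) +
        P₂ * P₃ * (X₂ : A) * ((X₁⁻¹ : Aˣ) : A)) =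
    (P₁ * P₂ + P₁ * P₃ + P₂ * P₃ + P₁ * P₃ * (X₃ : A) * ((X₂⁻¹ : Aˣ) : A) +
        P₂ * P₃ * (X₂ : A) * ((X₁⁻¹ : Aˣ) : A)) *
      (P₁ + P₂ + P₃ + P₂ * (X₂ : A) * ((X₁⁻¹ : Aˣ) : A) + P₃ * (X₃ : A) * ((X₂⁻¹ : Aˣ) : A)) := by
  have hq2 (r : A) : Commute (q ^ 2) r := Commute.pow_left (hq r) 2
  set u : A := X₂ * ↑X₁⁻¹
  set v : A := X₃ * ↑X₂⁻¹
  have hu1 : u * P₁ = q ^ 2 * (P₁ * u) := by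
    rw [mul_assoc, Units.inv_mul_eq_mul_mul_inv (hq2 _) h1, (hq2 _).symm.left_comm,
      c1x2.symm.left_comm]
  have hu2 : P₂ * u = q ^ 2 * (u * P₂) := by
    rw [← mul_assoc, h2, mul_assoc, mul_assoc, c2x1.units_inv_right.eq, ← mul_assoc (X₂ : A)]
  have hv2 : v * P₂ = q ^ 2 * (P₂ * v) := by
    rw [mul_assoc, Units.inv_mul_eq_mul_mul_inv (hq2 _) h2, (hq2 _).symm.left_comm,
      c2x3.symm.left_comm]
  have hv3 : P₃ * v = q ^ 2 * (v * P₃) := by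
    rw [← mul_assoc, h3, mul_assoc, mul_assoc, c3x2.units_inv_right.eq, ← mul_assoc (X₃ : A)]
  have huv : Commute u v :=
    (cx23.mul_right (Commute.refl _).units_inv_right).mul_left
      (cx13.units_inv_left.mul_right cx12.units_inv_left.units_inv_right)
  have key := commute_toda3 hq2 c12 c13 c23 hu1 hu2
    (c3x2.symm.mul_left c3x1.units_inv_right.symm) (c1x3.symm.mul_left c1x2.units_inv_right.symm)
    hv2 hv3 huv
  simpa only [u, v, mul_assoc, c23.left_comm] using key.eq
end

section
/- Pentagon identity consequence (algebraic form): in the quantum torus with UV = q²VU, the formal power series identity Ψ_q(U)Ψ_q(V) = Ψ_q(V)Ψ_q(q^{-1}UV)Ψ_q(U) holds, where Ψ_q(z) = ∏_{k=0}^∞ (1 + q^{2k+1} z)^{-1} is the compact quantum dilogarithm viewed as a formal power series in z. -/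
/-!
Both sides are expanded in the normally ordered monomials `U^m V^n`. On the left the coefficient is
`a_m a_n`. On the right, `(q⁻¹UV)^k = q^{-k²} U^k V^k`, and moving `V^j` past `U^m` costs `q^{-2jm}`,
so the coefficient is `q^{-2nm} Σ_k q^{k²} a_k a_{n-k} a_{m-k}`. That this triple sum equals
`q^{2nm} a_n a_m` follows by induction on `n` from the recurrence of the `a_n`: splitting
`q^{2n+2} - 1 = (q^{2(n+1-k)} - 1) + q^{2(n+1-k)} (q^{2k} - 1)` in the `k`-th term and applying the
recurrence to `a_{n+1-k}` in the first part and to `a_k` in the second expresses the sum at `n + 1`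
through the sums at `n`.
-/

open Finset

namespace QuantumTorus

variable {K : Type*} [Field K]

/-- The triple sum is truncated to `k ≤ m` by hand, to avoid truncated subtraction in `a (m - k)`. -/
def tripleSum (q : K) (a : ℕ → K) (n m : ℕ) : K :=
  ∑ k ∈ range (n + 1), q ^ (k ^ 2) * a k * a (n - k) * if k ≤ m then a (m - k) else 0

lemma tripleSum_zero_right {a : ℕ → K} (q : K) (ha0 : a 0 = 1) (n : ℕ) :
    tripleSum q a n 0 = a n := by
  rw [tripleSum, sum_range_succ']
  simp [ha0]

lemma tripleSum_succ_succ {q : K} {a : ℕ → K}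
    (harec : ∀ n : ℕ, a (n + 1) * (q ^ (2 * n + 2) - 1) = q * a n) (n m : ℕ) :
    tripleSum q a (n + 1) (m + 1) * (q ^ (2 * n + 2) - 1)
      = q * tripleSum q a n (m + 1) + q ^ (2 * n + 2) * tripleSum q a n m := by
  set c : ℕ → K := fun k => if k ≤ m + 1 then a (m + 1 - k) else 0
  have hsplit : ∀ k ∈ range (n + 2),
      q ^ (k ^ 2) * a k * a (n + 1 - k) * c k * (q ^ (2 * n + 2) - 1)
        = q ^ (k ^ 2) * a k * c k * (a (n + 1 - k) * (q ^ (2 * (n + 1 - k)) - 1))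
          + q ^ (k ^ 2 + 2 * (n + 1 - k)) * a (n + 1 - k) * c k * (a k * (q ^ (2 * k) - 1)) := by
    intro k hk
    obtain ⟨j, hj⟩ : ∃ j, n + 1 = k + j := ⟨n + 1 - k, by grind⟩
    rw [hj, Nat.add_sub_cancel_left, show 2 * n + 2 = 2 * k + 2 * j by omega]
    ring
  have hfirst : ∑ k ∈ range (n + 2),
      q ^ (k ^ 2) * a k * c k * (a (n + 1 - k) * (q ^ (2 * (n + 1 - k)) - 1))
        = q * tripleSum q a n (m + 1) := by
    rw [sum_range_succ, tripleSum, mul_sum]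
    simp only [Nat.sub_self, mul_zero, pow_zero, sub_self, add_zero]
    refine sum_congr rfl fun k hk => ?_
    rw [show n + 1 - k = (n - k) + 1 by grind, mul_add, mul_one, harec]
    ring
  have hsecond : ∑ k ∈ range (n + 2),
      q ^ (k ^ 2 + 2 * (n + 1 - k)) * a (n + 1 - k) * c k * (a k * (q ^ (2 * k) - 1))
        = q ^ (2 * n + 2) * tripleSum q a n m := by
    rw [sum_range_succ', tripleSum, mul_sum]
    simp only [pow_zero, mul_zero, sub_self, add_zero]
    refine sum_congr rfl fun j hj => ?_
    have hc : c (j + 1) = if j ≤ m then a (m - j) else 0 := by simp [c]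
    rw [hc, mul_add, mul_one, harec, show n + 1 - (j + 1) = n - j by omega]
    have hexp : q ^ ((j + 1) ^ 2 + 2 * (n - j)) * q = q ^ (2 * n + 2) * q ^ (j ^ 2) := by
      rw [← pow_succ, ← pow_add]
      congr 1
      have := mem_range.mp hj
      grind
    linear_combination (a (n - j) * a j * if j ≤ m then a (m - j) else 0) * hexp
  rw [tripleSum, sum_mul, sum_congr rfl hsplit, sum_add_distrib, hfirst, hsecond]

lemma dilogCoeff_ne_zero {q : K} {a : ℕ → K} (hq : q ≠ 0) (ha0 : a 0 = 1)
    (harec : ∀ n : ℕ, a (n + 1) * (q ^ (2 * n + 2) - 1) = q * a n) (n : ℕ) : a n ≠ 0 := by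
  induction n with
  | zero => simp [ha0]
  | succ n ih =>
    intro h
    simpa [h, hq, ih] using harec n

lemma pow_two_mul_add_two_sub_one_ne_zero {q : K} {a : ℕ → K} (hq : q ≠ 0) (ha0 : a 0 = 1)
    (harec : ∀ n : ℕ, a (n + 1) * (q ^ (2 * n + 2) - 1) = q * a n) (n : ℕ) :
    q ^ (2 * n + 2) - 1 ≠ 0 := by
  intro h
  simpa [h, hq, dilogCoeff_ne_zero hq ha0 harec n] using harec n

theorem tripleSum_eq {q : K} {a : ℕ → K} (hq : q ≠ 0) (ha0 : a 0 = 1)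
    (harec : ∀ n : ℕ, a (n + 1) * (q ^ (2 * n + 2) - 1) = q * a n) (n m : ℕ) :
    tripleSum q a n m = q ^ (2 * n * m) * a n * a m := by
  induction n generalizing m with
  | zero => simp [tripleSum, ha0]
  | succ n ih =>
    cases m with
    | zero => simp [tripleSum_zero_right q ha0, ha0]
    | succ m =>
      refine mul_right_cancel₀ (pow_two_mul_add_two_sub_one_ne_zero hq ha0 harec n) ?_
      rw [tripleSum_succ_succ harec, ih, ih]
      linear_combination -(q ^ (2 * (n + 1) * (m + 1)) * a (m + 1)) * harec n
        - (q ^ (2 * n * m + 2 * n + 1) * a n) * harec m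

/-- `twistedConv q f g` is the coefficient function of the product of `Σ f(a,b) U^a V^b` and
`Σ g(a,b) U^a V^b` in the quantum torus `UV = q²VU`, using `V^b U^a = q^{-2ab} U^a V^b`. -/
def twistedConv (q : K) (f g : ℕ × ℕ → K) (p : ℕ × ℕ) : K :=
  ∑ x ∈ antidiagonal p.1, ∑ y ∈ antidiagonal p.2,
    q ^ (-(2 * (y.1 : ℤ) * (x.2 : ℤ))) * f (x.1, y.1) * g (x.2, y.2)

def seriesU (a : ℕ → K) (p : ℕ × ℕ) : K := if p.2 = 0 then a p.1 else 0

def seriesV (a : ℕ → K) (p : ℕ × ℕ) : K := if p.1 = 0 then a p.2 else 0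

def seriesDiag (c : ℕ → K) (p : ℕ × ℕ) : K := if p.1 = p.2 then c p.1 else 0

lemma twistedConv_seriesU_seriesV (q : K) (a b : ℕ → K) (p : ℕ × ℕ) :
    twistedConv q (seriesU a) (seriesV b) p = a p.1 * b p.2 := by
  rw [twistedConv, ← Nat.sum_antidiagonal_swap]
  simp [seriesU, seriesV, Nat.sum_antidiagonal_eq_sum_range_succ_mk]

lemma twistedConv_seriesV_left (q : K) (b : ℕ → K) (g : ℕ × ℕ → K) (m n : ℕ) :
    twistedConv q (seriesV b) g (m, n)
      = ∑ y ∈ antidiagonal n, q ^ (-(2 * (y.1 : ℤ) * m)) * b y.1 * g (m, y.2) := by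
  simp [twistedConv, seriesV, Nat.sum_antidiagonal_eq_sum_range_succ_mk]

lemma twistedConv_seriesDiag_seriesU (q : K) (c b : ℕ → K) (M t : ℕ) :
    twistedConv q (seriesDiag c) (seriesU b) (M, t)
      = if t ≤ M then q ^ (-(2 * (t : ℤ) * (M - t : ℕ))) * c t * b (M - t) else 0 := by
  rw [twistedConv, sum_congr rfl fun x _ => Nat.sum_antidiagonal_swap.symm]
  simp [seriesDiag, seriesU, Nat.sum_antidiagonal_eq_sum_range_succ_mk]

lemma twistedConv_seriesV_twistedConv_seriesDiag_seriesU {q : K} (hq : q ≠ 0) (a : ℕ → K)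
    (m n : ℕ) :
    twistedConv q (seriesV a)
        (twistedConv q (seriesDiag fun k => q ^ (-(k : ℤ) ^ 2) * a k) (seriesU a)) (m, n)
      = q ^ (-(2 * n * m : ℤ)) * tripleSum q a n m := by
  rw [twistedConv_seriesV_left, ← Nat.sum_antidiagonal_swap,
    Nat.sum_antidiagonal_eq_sum_range_succ_mk, tripleSum, mul_sum]
  refine sum_congr rfl fun k hk => ?_
  have hkn : k ≤ n := Nat.lt_succ_iff.mp (mem_range.mp hk)
  simp only [Prod.swap, twistedConv_seriesDiag_seriesU]
  split_ifs with hkm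
  · have hexp : q ^ (-(2 * ((n - k : ℕ) : ℤ) * m)) *
          (q ^ (-(2 * (k : ℤ) * (m - k : ℕ))) * q ^ (-(k : ℤ) ^ 2))
        = q ^ (-(2 * n * m : ℤ)) * q ^ (k ^ 2) := by
      rw [← zpow_natCast, ← zpow_add₀ hq, ← zpow_add₀ hq, ← zpow_add₀ hq]
      congr 1
      push_cast [hkn, hkm]
      ring
    linear_combination (a (n - k) * a k * a (m - k)) * hexp
  · simp

end QuantumTorus

/-- The pentagon identity `Ψ_q(U)Ψ_q(V) = Ψ_q(V)Ψ_q(q⁻¹UV)Ψ_q(U)` in the completed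
quantum torus with `UV = q²VU`, stated at the level of normally ordered coefficients.
Elements `Σ f(a,b) U^a V^b` multiply by the twisted convolution
`(f⋆g)(p) = Σ q^{-2b₁a₂} f(a₁,b₁)g(a₂,b₂)` (from `V^{b₁}U^{a₂} = q^{-2b₁a₂}U^{a₂}V^{b₁}`).
`Ψ_q(z) = Σ_n a_n z^n` is the compact quantum dilogarithm `Π_{k≥0}(1+q^{2k+1}z)⁻¹`,
whose coefficients satisfy `a₀ = 1`, `a_{n+1}(q^{2n+2}−1) = q a_n`; note
`(q⁻¹UV)^k = q^{-k²} U^k V^k`. -/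
theorem stmt16 {K : Type*} [Field K] (q : K) (hq : q ≠ 0)
    (a : ℕ → K) (ha0 : a 0 = 1)
    (harec : ∀ n : ℕ, a (n + 1) * (q ^ (2 * n + 2) - 1) = q * a n)
    (conv : (ℕ × ℕ → K) → (ℕ × ℕ → K) → (ℕ × ℕ → K))
    (hconv : ∀ f g p, conv f g p =
      ∑ x ∈ Finset.HasAntidiagonal.antidiagonal p.1, ∑ y ∈ Finset.HasAntidiagonal.antidiagonal p.2,
        q ^ (-(2 * (y.1 : ℤ) * (x.2 : ℤ))) * f (x.1, y.1) * g (x.2, y.2))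
    (fU fV fUV : ℕ × ℕ → K)
    (hfU : ∀ p, fU p = if p.2 = 0 then a p.1 else 0)
    (hfV : ∀ p, fV p = if p.1 = 0 then a p.2 else 0)
    (hfUV : ∀ p, fUV p = if p.1 = p.2 then q ^ (-((p.1 : ℤ)) ^ 2) * a p.1 else 0) :
    conv fU fV = conv fV (conv fUV fU) := by
  open QuantumTorus in
  obtain rfl : conv = twistedConv q := funext₂ fun f g => funext (hconv f g)
  obtain rfl : fU = seriesU a := funext hfU
  obtain rfl : fV = seriesV a := funext hfV
  obtain rfl : fUV = seriesDiag fun k => q ^ (-(k : ℤ) ^ 2) * a k := funext hfUV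
  funext ⟨m, n⟩
  rw [twistedConv_seriesU_seriesV, twistedConv_seriesV_twistedConv_seriesDiag_seriesU hq,
    tripleSum_eq hq ha0 harec, ← mul_assoc, ← mul_assoc, ← zpow_natCast, ← zpow_add₀ hq]
  push_cast
  rw [neg_add_cancel, zpow_zero, one_mul, mul_comm]
end
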